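/- Let M be a problem-sensitive model and a, b ∈ P decision problems. If a ≤ b, then Π_a ⊑ Π_b, i.e. every cell of the partition Π_a is a union of cells of the partition Π_b. -/
import Mathlib


/-- Formulas of classical propositional logic `L_CPL` over a countable set
of atomic propositions (represented by natural numbers). -/
inductive CPL : Type
  | top : CPL
  | atom : ℕ → CPL
  | neg : CPL → CPL
  | or : CPL → CPL → CPL
  | and : CPL → CPL → CPL
  deriving DecidableEq
/-- A problem-sensitive model `M = (W, R, (P, ⊕, s), f, V)`: a nonempty set of
worlds, a serial accessibility (conative) relation, a problems model, a
function `f` assigning to each world the decision problem the agent faces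
there, and a valuation. -/
structure PSModel where
  W : Type
  Wnonempty : Nonempty W
  R : W → W → Prop
  serial : ∀ w, ∃ v, R w v
  P : Type
  Pnonempty : Nonempty P
  fuse : P → P → P
  idem : ∀ a, fuse a a = a
  comm : ∀ a b, fuse a b = fuse b a
  assoc : ∀ a b c, fuse (fuse a b) c = fuse a (fuse b c)
  fusion : ∀ A : Set P, ∃ a, (∀ x ∈ A, fuse x a = a) ∧
    ∀ b, (∀ x ∈ A, fuse x b = b) → fuse a b = b
  satom : ℕ → Set P
  upward : ∀ (p : ℕ) (a b : P), fuse a b = b → a ∈ satom p → b ∈ satom p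
  f : W → P
  V : ℕ → Set W

/-- The extension of the solution assignment `s` to the whole language `L_CPL`. -/
def PSModel.sol (M : PSModel) : CPL → Set M.P
  | .top => Set.univ
  | .atom p => M.satom p
  | .neg φ => M.sol φ
  | .or φ ψ => M.sol φ ∩ M.sol ψ
  | .and φ ψ => {c | ∃ a ∈ M.sol φ, ∃ b ∈ M.sol ψ, c = M.fuse a b}

/-- Classical satisfaction of `L_CPL` formulas at a world. -/
def PSModel.satCPL (M : PSModel) : M.W → CPL → Prop
  | _, .top => True
  | w, .atom p => w ∈ M.V p
  | w, .neg φ => ¬ M.satCPL w φ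
  | w, .or φ ψ => M.satCPL w φ ∨ M.satCPL w ψ
  | w, .and φ ψ => M.satCPL w φ ∧ M.satCPL w ψ
/-- The truth set `⟦φ⟧` of an `L_CPL` formula in a problem-sensitive model. -/
def PSModel.truthSet (M : PSModel) (φ : CPL) : Set M.W := {w | M.satCPL w φ}

/-- The (Lewisian) subject matter of a formula: `sm(⊤) = {W}`;
`sm(p) = {⟦p⟧, W∖⟦p⟧} ∖ {∅}`; `sm(¬φ) = sm(φ)`;
`sm(φ ∧ ψ) = sm(φ ∨ ψ) = {X ∩ Y | X ∈ sm(φ), Y ∈ sm(ψ)} ∖ {∅}`. -/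
def PSModel.sm (M : PSModel) : CPL → Set (Set M.W)
  | .top => {Set.univ}
  | .atom p => {M.truthSet (.atom p), (M.truthSet (.atom p))ᶜ} \ {∅}
  | .neg φ => M.sm φ
  | .or φ ψ => {Z | ∃ X ∈ M.sm φ, ∃ Y ∈ M.sm ψ, Z = X ∩ Y} \ {∅}
  | .and φ ψ => {Z | ∃ X ∈ M.sm φ, ∃ Y ∈ M.sm ψ, Z = X ∩ Y} \ {∅}

/-- Extensional parthood between collections of sets of worlds:
`Π₁ ⊑ Π₂` iff every element of `Π₁` is a union of elements of `Π₂`. -/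
def partOf {W : Type} (P1 P2 : Set (Set W)) : Prop :=
  ∀ X ∈ P1, ∃ S ⊆ P2, X = ⋃₀ S

/-- `s⁻¹(a)`: the set of formulas `φ` with `a ∈ s(φ)`. -/
def PSModel.sInv (M : PSModel) (a : M.P) : Set CPL := {φ | a ∈ M.sol φ}

/-- `⟦Γ⟧`: the set of worlds satisfying every formula in `Γ`. -/
def PSModel.cell (M : PSModel) (Γ : Set CPL) : Set M.W :=
  {w | ∀ φ ∈ Γ, M.satCPL w φ}

/-- `S⁻¹(a)`: the maximally satisfiable subsets of `s⁻¹(a)`, i.e. subsets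
`Γ ⊆ s⁻¹(a)` satisfied at some single world such that no strictly larger
subset of `s⁻¹(a)` is satisfiable at a single world. -/
def PSModel.maxSat (M : PSModel) (a : M.P) : Set (Set CPL) :=
  {Γ | Γ ⊆ M.sInv a ∧ (∃ w, w ∈ M.cell Γ) ∧
    ∀ Δ, Δ ⊆ M.sInv a → Γ ⊂ Δ → ¬ ∃ w, w ∈ M.cell Δ}

/-- The partition `Π_a = {⟦Γ⟧ : Γ ∈ S⁻¹(a)}` induced by a decision problem. -/
def PSModel.Pi (M : PSModel) (a : M.P) : Set (Set M.W) :=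
  {X | ∃ Γ ∈ M.maxSat a, X = M.cell Γ}

/-- For every problem-sensitive model `M` and decision problems
`a, b`: if `a ≤ b` (i.e. `a ⊕ b = b`), then `Π_a ⊑ Π_b`, i.e. every cell of
`Π_a` is a union of cells of `Π_b`. -/
lemma sol_upward (M : PSModel) (φ : CPL) : ∀ a b, M.fuse a b = b → a ∈ M.sol φ → b ∈ M.sol φ := by
  induction φ with
  | top => intro a b _ _; trivial
  | atom p => intro a b h ha; exact M.upward p a b h ha
  | neg φ ih => exact ih
  | or φ ψ ih1 ih2 => intro a b h ha; exact ⟨ih1 a b h ha.1, ih2 a b h ha.2⟩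
  | and φ ψ ih1 ih2 =>
    intro a b h ha
    obtain ⟨x, hx, y, hy, rfl⟩ := ha
    refine ⟨x, hx, M.fuse y b, ih2 y (M.fuse y b) ?_ hy, ?_⟩
    · rw [← M.assoc, M.idem]
    · rw [← M.assoc]; exact h.symm

theorem Pi_monotone (M : PSModel) (a b : M.P) (hab : M.fuse a b = b) :
    partOf (M.Pi a) (M.Pi b) := by
  have hsub : M.sInv a ⊆ M.sInv b := fun φ hφ => sol_upward M φ a b hab hφ
  intro X hX
  obtain ⟨Γ, ⟨hΓsub, ⟨w0, hw0⟩, _⟩, rfl⟩ := hX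
  refine ⟨{X | ∃ w ∈ M.cell Γ, X = M.cell {φ | φ ∈ M.sInv b ∧ M.satCPL w φ}}, ?_, ?_⟩
  · rintro X ⟨w, hw, rfl⟩
    refine ⟨_, ⟨fun φ hφ => hφ.1, ⟨w, fun φ hφ => hφ.2⟩, ?_⟩, rfl⟩
    rintro Δ hΔ ⟨hsub2, hne⟩ ⟨v, hv⟩
    obtain ⟨ψ, hψΔ, hψnot⟩ := Set.not_subset.mp hne
    have hψb : ψ ∈ M.sInv b := hΔ hψΔ
    have hψw : ¬ M.satCPL w ψ := fun h => hψnot ⟨hψb, h⟩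
    have hnegmem : CPL.neg ψ ∈ Δ := hsub2 ⟨hψb, hψw⟩
    exact (hv (CPL.neg ψ) hnegmem) (hv ψ hψΔ)
  · ext v
    constructor
    · intro hv
      exact Set.mem_sUnion.mpr ⟨_, ⟨v, hv, rfl⟩, fun φ hφ => hφ.2⟩
    · intro hv
      obtain ⟨_, ⟨w, hw, rfl⟩, hvcell⟩ := Set.mem_sUnion.mp hv
      intro φ hφ
      exact hvcell φ ⟨hsub (hΓsub hφ), hw φ hφ⟩
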